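/- arXiv:1609.00420 — 2 statements merged into one kernel-verified Lean document; each statement's English description precedes it below -/
import Mathlib

section
/- Let n ≥ 2 and let G be a connected finite simple graph on n vertices that is not isomorphic to the star K_{1,n−1}. Then H₂(K_{1,n−1}) < H₂(G); that is, the star uniquely minimizes Rényi 2-entropy among connected graphs on n vertices. -/
open Matrix Real Finset

namespace VNE

variable {V : Type*} [Fintype V] [DecidableEq V]

/-- The density matrix `ρ(G) = L(G) / tr (L(G))` of a graph. -/
noncomputable def rho (G : SimpleGraph V) : Matrix V V ℝ :=
  letI := Classical.decRel G.Adj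
  ((G.lapMatrix ℝ).trace)⁻¹ • G.lapMatrix ℝ

lemma rho_isHermitian (G : SimpleGraph V) : (rho G).IsHermitian := by
  letI := Classical.decRel G.Adj
  have h : (G.lapMatrix ℝ).IsHermitian := (SimpleGraph.posSemidef_lapMatrix ℝ G).1
  unfold rho
  unfold Matrix.IsHermitian at h ⊢
  rw [Matrix.conjTranspose_smul, h, star_trivial]

/-- The eigenvalues of the density matrix of `G`. -/
noncomputable def eigs (G : SimpleGraph V) : V → ℝ :=
  (rho_isHermitian G).eigenvalues

/-- The von Neumann entropy of a graph. -/
noncomputable def vnEntropy (G : SimpleGraph V) : ℝ :=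
  ∑ v, -(eigs G v * Real.logb 2 (eigs G v))

/-- The Rényi α-entropy of a graph. -/
noncomputable def renyiEntropy (α : ℝ) (G : SimpleGraph V) : ℝ :=
  (1 / (1 - α)) * Real.logb 2 (∑ v, eigs G v ^ α)

/-- The Rényi 2-entropy of a graph, `−log₂ tr(ρ(G)²)`. -/
noncomputable def renyi2 (G : SimpleGraph V) : ℝ :=
  - Real.logb 2 ((rho G * rho G).trace)

/-- `tr₂(G) = tr(ρ(G)²)`. -/
noncomputable def tr2 (G : SimpleGraph V) : ℝ :=
  (rho G * rho G).trace

/-- The degree of a vertex, as a real number. -/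
noncomputable def deg (G : SimpleGraph V) (v : V) : ℝ :=
  letI := Classical.decRel G.Adj
  (G.degree v : ℝ)

/-- The degree sum `d_G` of a graph. -/
noncomputable def degSum (G : SimpleGraph V) : ℝ :=
  ∑ v, deg G v

/-- The star `K_{1,n-1}` on `n` vertices, with center the vertex `0`. -/
def starOn (n : ℕ) : SimpleGraph (Fin n) where
  Adj x y := x ≠ y ∧ (x.val = 0 ∨ y.val = 0)
  symm := ⟨fun _ _ h => ⟨h.1.symm, h.2.symm⟩⟩
  loopless := ⟨fun _ h => h.1 rfl⟩

open SimpleGraph in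
lemma degree_add_degree_le (G : SimpleGraph V) [DecidableRel G.Adj] {u v : V}
    (h : G.Adj u v) : G.degree u + G.degree v ≤ G.edgeFinset.card + 1 := by
  have hsub : G.incidenceFinset u ∪ G.incidenceFinset v ⊆ G.edgeFinset := by
    intro e he
    rcases Finset.mem_union.1 he with he | he <;>
      exact mem_edgeFinset.2 ((Set.mem_toFinset.1 he).1)
  have hint : G.incidenceFinset u ∩ G.incidenceFinset v = {s(u, v)} := by
    ext e
    simp only [Finset.mem_inter, SimpleGraph.incidenceFinset, Set.mem_toFinset,
      Finset.mem_singleton]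
    constructor
    · rintro ⟨h1, h2⟩
      have : e ∈ G.incidenceSet u ∩ G.incidenceSet v := ⟨h1, h2⟩
      rwa [G.incidenceSet_inter_incidenceSet_of_adj h] at this
    · rintro rfl
      exact ⟨G.mk'_mem_incidenceSet_left_iff.2 h, G.mk'_mem_incidenceSet_right_iff.2 h⟩
  have hcard := Finset.card_union_add_card_inter (G.incidenceFinset u) (G.incidenceFinset v)
  rw [hint, Finset.card_singleton, G.card_incidenceFinset_eq_degree,
    G.card_incidenceFinset_eq_degree] at hcard
  have hc := Finset.card_le_card hsub
  omega

open SimpleGraph in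
lemma two_mul_sum_sq (G : SimpleGraph V) [DecidableRel G.Adj] :
    2 * ∑ v, G.degree v ^ 2
      = ∑ v, ∑ w ∈ G.neighborFinset v, (G.degree v + G.degree w) := by
  have h1 : ∀ v : V, ∑ _w ∈ G.neighborFinset v, G.degree v = G.degree v ^ 2 := by
    intro v
    rw [Finset.sum_const, G.card_neighborFinset_eq_degree, smul_eq_mul, sq]
  have h2 : ∑ v, ∑ w ∈ G.neighborFinset v, G.degree w = ∑ v, G.degree v ^ 2 := by
    have key : ∀ v : V, ∑ w ∈ G.neighborFinset v, G.degree w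
        = ∑ w, if G.Adj v w then G.degree w else 0 := by
      intro v
      rw [neighborFinset_eq_filter, Finset.sum_filter]
    simp_rw [key]
    rw [Finset.sum_comm]
    refine Finset.sum_congr rfl fun w _ => ?_
    rw [← Finset.sum_filter]
    have : Finset.univ.filter (fun v => G.Adj v w) = G.neighborFinset w := by
      ext x
      simp [adj_comm]
    rw [this, Finset.sum_const, G.card_neighborFinset_eq_degree, smul_eq_mul, sq]
  calc 2 * ∑ v, G.degree v ^ 2 = (∑ v, G.degree v ^ 2) + ∑ v, G.degree v ^ 2 := by ring
    _ = (∑ v, ∑ _w ∈ G.neighborFinset v, G.degree v)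
        + ∑ v, ∑ w ∈ G.neighborFinset v, G.degree w := by
        rw [h2]
        congr 1
        exact (Finset.sum_congr rfl fun v _ => (h1 v)).symm
    _ = ∑ v, ∑ w ∈ G.neighborFinset v, (G.degree v + G.degree w) := by
        rw [← Finset.sum_add_distrib]
        exact Finset.sum_congr rfl fun v _ => (Finset.sum_add_distrib).symm

open SimpleGraph in
lemma sum_sq_le (G : SimpleGraph V) [DecidableRel G.Adj] :
    2 * ∑ v, G.degree v ^ 2 ≤ 2 * G.edgeFinset.card * (G.edgeFinset.card + 1) := by
  rw [two_mul_sum_sq]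
  calc ∑ v, ∑ w ∈ G.neighborFinset v, (G.degree v + G.degree w)
      ≤ ∑ v, ∑ _w ∈ G.neighborFinset v, (G.edgeFinset.card + 1) := by
        refine Finset.sum_le_sum fun v _ => Finset.sum_le_sum fun w hw => ?_
        exact degree_add_degree_le G ((G.mem_neighborFinset v w).1 hw)
    _ = ∑ v, G.degree v * (G.edgeFinset.card + 1) := by
        refine Finset.sum_congr rfl fun v _ => ?_
        rw [Finset.sum_const, G.card_neighborFinset_eq_degree, smul_eq_mul]
    _ = (∑ v, G.degree v) * (G.edgeFinset.card + 1) := by rw [Finset.sum_mul]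
    _ = 2 * G.edgeFinset.card * (G.edgeFinset.card + 1) := by
        rw [G.sum_degrees_eq_twice_card_edges]

open SimpleGraph in
lemma sum_sq_lt (G : SimpleGraph V) [DecidableRel G.Adj]
    {a u : V} (ha : G.degree a = 1) (hu : G.Adj a u)
    (hstrict : G.degree a + G.degree u < G.edgeFinset.card + 1) :
    2 * ∑ v, G.degree v ^ 2 < 2 * G.edgeFinset.card * (G.edgeFinset.card + 1) := by
  rw [two_mul_sum_sq]
  have hNa : G.neighborFinset a = {u} := by
    have hmem : u ∈ G.neighborFinset a := (G.mem_neighborFinset a u).2 hu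
    have hcard : (G.neighborFinset a).card = 1 := by
      rw [G.card_neighborFinset_eq_degree, ha]
    obtain ⟨x, hx⟩ := Finset.card_eq_one.1 hcard
    rw [hx] at hmem ⊢
    rw [Finset.mem_singleton.1 hmem]
  have hlt : ∑ v, ∑ w ∈ G.neighborFinset v, (G.degree v + G.degree w)
      < ∑ v, G.degree v * (G.edgeFinset.card + 1) := by
    refine Finset.sum_lt_sum (fun v _ => ?_) ⟨a, Finset.mem_univ a, ?_⟩
    · calc ∑ w ∈ G.neighborFinset v, (G.degree v + G.degree w)
          ≤ ∑ _w ∈ G.neighborFinset v, (G.edgeFinset.card + 1) :=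
            Finset.sum_le_sum fun w hw => degree_add_degree_le G ((G.mem_neighborFinset v w).1 hw)
        _ = G.degree v * (G.edgeFinset.card + 1) := by
            rw [Finset.sum_const, G.card_neighborFinset_eq_degree, smul_eq_mul]
    · rw [hNa, Finset.sum_singleton, ha, one_mul]
      simpa [ha] using hstrict
  calc ∑ v, ∑ w ∈ G.neighborFinset v, (G.degree v + G.degree w)
      < ∑ v, G.degree v * (G.edgeFinset.card + 1) := hlt
    _ = (∑ v, G.degree v) * (G.edgeFinset.card + 1) := by rw [Finset.sum_mul]
    _ = 2 * G.edgeFinset.card * (G.edgeFinset.card + 1) := by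
        rw [G.sum_degrees_eq_twice_card_edges]

open SimpleGraph in
lemma trace_lap (G : SimpleGraph V) [DecidableRel G.Adj] :
    (G.lapMatrix ℝ).trace = ∑ v, (G.degree v : ℝ) := by
  unfold Matrix.trace
  refine Finset.sum_congr rfl fun v _ => ?_
  simp [Matrix.diag, SimpleGraph.lapMatrix, SimpleGraph.degMatrix]

open SimpleGraph in
lemma trace_lap_sq (G : SimpleGraph V) [DecidableRel G.Adj] :
    (G.lapMatrix ℝ * G.lapMatrix ℝ).trace
      = (∑ v, (G.degree v : ℝ) ^ 2) + ∑ v, (G.degree v : ℝ) := by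
  have hent : ∀ i j : V, G.lapMatrix ℝ i j
      = (if i = j then (G.degree i : ℝ) else 0) - (if G.Adj i j then 1 else 0) := by
    intro i j
    by_cases hij : i = j
    · subst hij
      simp [SimpleGraph.lapMatrix, SimpleGraph.degMatrix, Matrix.diagonal]
    · simp [SimpleGraph.lapMatrix, SimpleGraph.degMatrix, Matrix.diagonal, hij]
  have key : ∀ i : V, ∑ j, G.lapMatrix ℝ i j * G.lapMatrix ℝ j i
      = (G.degree i : ℝ) ^ 2 + (G.degree i : ℝ) := by
    intro i
    rw [← Finset.add_sum_erase _ _ (Finset.mem_univ i)]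
    have h1 : G.lapMatrix ℝ i i = (G.degree i : ℝ) := by simp [hent]
    have h2 : ∀ j ∈ Finset.univ.erase i,
        G.lapMatrix ℝ i j * G.lapMatrix ℝ j i = if G.Adj i j then (1 : ℝ) else 0 := by
      intro j hj
      have hij : i ≠ j := fun hh => (Finset.mem_erase.1 hj).1 hh.symm
      rw [hent, hent]
      by_cases hadj : G.Adj i j
      · simp [hij, hij.symm, hadj, hadj.symm]
      · have : ¬ G.Adj j i := fun hh => hadj hh.symm
        simp [hij, hij.symm, hadj, this]
    rw [Finset.sum_congr rfl h2, h1]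
    have h3 : ∑ j ∈ Finset.univ.erase i, (if G.Adj i j then (1 : ℝ) else 0)
        = ∑ j, (if G.Adj i j then (1 : ℝ) else 0) :=
      Finset.sum_erase _ (by simp)
    rw [h3, Finset.sum_boole]
    have h4 : Finset.univ.filter (fun j => G.Adj i j) = G.neighborFinset i :=
      (neighborFinset_eq_filter G).symm
    rw [h4, G.card_neighborFinset_eq_degree, sq]
  unfold Matrix.trace
  simp only [Matrix.diag, Matrix.mul_apply]
  rw [Finset.sum_congr rfl fun i _ => key i, Finset.sum_add_distrib]

open SimpleGraph in
lemma tr2_eq (G : SimpleGraph V) [inst : DecidableRel G.Adj] :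
    tr2 G = ((∑ v, (G.degree v : ℝ) ^ 2) + ∑ v, (G.degree v : ℝ))
      / (∑ v, (G.degree v : ℝ)) ^ 2 := by
  obtain rfl : inst = Classical.decRel G.Adj := Subsingleton.elim _ _
  letI := Classical.decRel G.Adj
  unfold tr2 rho
  rw [Matrix.smul_mul, Matrix.mul_smul, smul_smul, Matrix.trace_smul, trace_lap_sq G,
    trace_lap G, smul_eq_mul, div_eq_mul_inv, sq (∑ v, (G.degree v : ℝ)), mul_inv]
  ring

open SimpleGraph in
lemma degree_pos (G : SimpleGraph V) [DecidableRel G.Adj] (hG : G.Connected)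
    (h2 : 2 ≤ Fintype.card V) (v : V) : 0 < G.degree v := by
  obtain ⟨w, hw⟩ := Fintype.exists_ne_of_one_lt_card (by omega) v
  obtain ⟨p⟩ := hG.preconnected v w
  cases p with
  | nil => exact absurd rfl hw
  | cons h q => exact G.degree_pos_iff_exists_adj v |>.2 ⟨_, h⟩

open SimpleGraph in
lemma card_le_edge_card_add_one (G : SimpleGraph V) [DecidableRel G.Adj]
    (hG : G.Connected) : Fintype.card V ≤ G.edgeFinset.card + 1 := by
  obtain ⟨r⟩ := hG.nonempty
  have H : ∀ v, v ≠ r → ∃ w, G.Adj v w ∧ G.dist w r + 1 = G.dist v r := by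
    intro v hv
    obtain ⟨p, hp, hlen⟩ := hG.exists_path_of_dist v r
    cases p with
    | nil => exact absurd rfl hv
    | @cons _ x _ h q =>
      refine ⟨x, h, ?_⟩
      have h1 : G.dist x r ≤ q.length := SimpleGraph.dist_le q
      have h2 : G.dist v r ≤ G.dist v x + G.dist x r := hG.dist_triangle
      have h3 : G.dist v x = 1 := (SimpleGraph.dist_eq_one_iff_adj).2 h
      rw [SimpleGraph.Walk.length_cons] at hlen
      omega
  choose f hadj hdist using H
  set F : V → Sym2 V := fun v => if h : v = r then s(r, r) else s(v, f v h) with hF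
  have hmaps : ∀ a ∈ Finset.univ.erase r, F a ∈ G.edgeFinset := by
    intro a ha
    have har : a ≠ r := (Finset.mem_erase.1 ha).1
    rw [hF]
    simp only [dif_neg har]
    exact mem_edgeFinset.2 (hadj a har)
  have hinj : Set.InjOn F (Finset.univ.erase r : Finset V) := by
    intro a ha b hb hab
    have har : a ≠ r := by simpa using ha
    have hbr : b ≠ r := by simpa using hb
    rw [hF] at hab
    simp only [dif_neg har, dif_neg hbr, Sym2.eq_iff] at hab
    rcases hab with ⟨h1, _⟩ | ⟨h1, h2⟩
    · exact h1
    · have d1 := hdist a har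
      have d2 := hdist b hbr
      rw [← h1] at d2
      rw [h2] at d1
      omega
  have := Finset.card_le_card_of_injOn F hmaps hinj
  rw [Finset.card_erase_of_mem (Finset.mem_univ r), Finset.card_univ] at this
  omega

open SimpleGraph in
lemma star_of_degree {n : ℕ} (hn : 2 ≤ n) (G : SimpleGraph (Fin n)) [DecidableRel G.Adj]
    {u : Fin n} (hu : G.degree u = n - 1) (hm : G.edgeFinset.card = n - 1) :
    Nonempty (G ≃g starOn n) := by
  haveI : NeZero n := ⟨by omega⟩
  have hN : G.neighborFinset u = Finset.univ.erase u := by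
    refine Finset.eq_of_subset_of_card_le (fun x hx => ?_) ?_
    · exact Finset.mem_erase.2 ⟨fun hh => G.irrefl (hh ▸ (G.mem_neighborFinset u x).1 hx),
        Finset.mem_univ x⟩
    · rw [Finset.card_erase_of_mem (Finset.mem_univ u), Finset.card_univ, Fintype.card_fin,
        G.card_neighborFinset_eq_degree, hu]
  have hadj : ∀ x y : Fin n, G.Adj x y ↔ x ≠ y ∧ (x = u ∨ y = u) := by
    intro x y
    constructor
    · intro h
      refine ⟨h.ne, ?_⟩
      by_contra hc
      push_neg at hc
      obtain ⟨hxu, hyu⟩ := hc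
      have hnotmem : s(x, y) ∉ G.incidenceFinset u := by
        rw [SimpleGraph.incidenceFinset, Set.mem_toFinset]
        rintro ⟨-, hmem⟩
        rw [Sym2.mem_iff] at hmem
        rcases hmem with h' | h'
        · exact hxu h'.symm
        · exact hyu h'.symm
      have hsub : insert s(x, y) (G.incidenceFinset u) ⊆ G.edgeFinset := by
        intro e he
        rcases Finset.mem_insert.1 he with rfl | he
        · exact mem_edgeFinset.2 h
        · rw [SimpleGraph.incidenceFinset, Set.mem_toFinset] at he
          exact mem_edgeFinset.2 he.1
      have hcard := Finset.card_le_card hsub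
      rw [Finset.card_insert_of_notMem hnotmem, G.card_incidenceFinset_eq_degree, hu, hm]
        at hcard
      omega
    · rintro ⟨hxy, rfl | rfl⟩
      · have : y ∈ G.neighborFinset x := by
          rw [hN]
          exact Finset.mem_erase.2 ⟨fun hh => hxy hh.symm, Finset.mem_univ y⟩
        exact (G.mem_neighborFinset x y).1 this
      · have : x ∈ G.neighborFinset y := by
          rw [hN]
          exact Finset.mem_erase.2 ⟨hxy, Finset.mem_univ x⟩
        exact ((G.mem_neighborFinset y x).1 this).symm
  refine ⟨⟨Equiv.swap u 0, ?_⟩⟩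
  intro a b
  show (Equiv.swap u 0 a ≠ Equiv.swap u 0 b ∧
      ((Equiv.swap u 0 a).val = 0 ∨ (Equiv.swap u 0 b).val = 0)) ↔ G.Adj a b
  rw [hadj a b]
  have hzero : ∀ x : Fin n, (Equiv.swap u 0 x).val = 0 ↔ x = u := by
    intro x
    have hval : ∀ y : Fin n, y.val = 0 ↔ y = 0 := by
      intro y
      rw [Fin.ext_iff]
      simp
    rw [hval, Equiv.swap_apply_eq_iff, Equiv.swap_apply_right]
  rw [hzero, hzero]
  simp [Equiv.swap_apply_ne_self_iff, ne_eq, EmbeddingLike.apply_eq_iff_eq]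

open SimpleGraph in
lemma starOn_neighborFinset_zero {n : ℕ} [NeZero n] [DecidableRel (starOn n).Adj] :
    (starOn n).neighborFinset (0 : Fin n) = Finset.univ.erase 0 := by
  ext y
  rw [SimpleGraph.mem_neighborFinset, Finset.mem_erase]
  show ((0 : Fin n) ≠ y ∧ ((0 : Fin n).val = 0 ∨ y.val = 0)) ↔ _
  constructor
  · rintro ⟨h, -⟩
    exact ⟨fun hh => h hh.symm, Finset.mem_univ y⟩
  · rintro ⟨h, -⟩
    exact ⟨fun hh => h hh.symm, Or.inl (by simp)⟩

open SimpleGraph in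
lemma starOn_neighborFinset_ne {n : ℕ} [NeZero n] [DecidableRel (starOn n).Adj]
    {v : Fin n} (hv : v ≠ 0) : (starOn n).neighborFinset v = {0} := by
  ext y
  rw [SimpleGraph.mem_neighborFinset, Finset.mem_singleton]
  show (v ≠ y ∧ (v.val = 0 ∨ y.val = 0)) ↔ y = 0
  constructor
  · rintro ⟨h, hc | hc⟩
    · exact absurd (Fin.ext hc : v = 0) hv
    · exact Fin.ext hc
  · rintro rfl
    exact ⟨hv, Or.inr (by simp)⟩

theorem star_unique_min_renyi2_connected {n : ℕ} (hn : 2 ≤ n) (G : SimpleGraph (Fin n))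
    (hG : G.Connected) (hne : ¬ Nonempty (G ≃g starOn n)) :
    renyi2 (starOn n) < renyi2 G := by
  haveI : NeZero n := ⟨by omega⟩
  letI : DecidableRel G.Adj := Classical.decRel G.Adj
  letI : DecidableRel (starOn n).Adj := Classical.decRel (starOn n).Adj
  obtain ⟨m, hmdef⟩ : ∃ m, G.edgeFinset.card = m := ⟨_, rfl⟩
  obtain ⟨S, hSdef⟩ : ∃ S, ∑ v, G.degree v ^ 2 = S := ⟨_, rfl⟩
  have hk1 : 1 ≤ n - 1 := by omega
  have hmn : n ≤ m + 1 := by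
    have := card_le_edge_card_add_one G hG
    rwa [Fintype.card_fin, hmdef] at this
  have hm1 : 1 ≤ m := by omega
  have h2S : 2 * S ≤ 2 * m * (m + 1) := by
    have h := sum_sq_le G
    rwa [hmdef, hSdef] at h
  -- the key combinatorial inequality
  have key : (n - 1) * (2 * m + S) < m ^ 2 * ((n - 1) + 3) := by
    rcases Nat.lt_or_ge (n - 1) m with hlt | hge
    · have h2S' : 2 * S ≤ 2 * (m * (m + 1)) := (mul_assoc 2 m (m + 1)) ▸ h2S
      have hSle : S ≤ m * (m + 1) := by omega
      nlinarith [hlt, hk1, hm1, hSle]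
    · have hmeq : m = n - 1 := by omega
      have hdegpos : ∀ v, 0 < G.degree v :=
        degree_pos G hG (by rw [Fintype.card_fin]; omega)
      have hleaf : ∃ a, G.degree a = 1 := by
        by_contra hno
        push_neg at hno
        have h2 : ∀ v, 2 ≤ G.degree v := fun v => by
          have := hdegpos v
          have := hno v
          omega
        have hsum : 2 * n ≤ ∑ v, G.degree v := by
          calc 2 * n = ∑ _v : Fin n, 2 := by
                rw [Finset.sum_const, Finset.card_univ, Fintype.card_fin, smul_eq_mul]
                ring
            _ ≤ _ := Finset.sum_le_sum fun v _ => h2 v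
        rw [G.sum_degrees_eq_twice_card_edges, hmdef] at hsum
        omega
      obtain ⟨a, ha⟩ := hleaf
      obtain ⟨u, hu⟩ := (G.degree_pos_iff_exists_adj a).1 (ha ▸ one_pos)
      have hune : G.degree u ≠ n - 1 := by
        intro hdeq
        exact hne (star_of_degree hn G hdeq (by rw [hmdef]; omega))
      have hult : G.degree u < n := by
        have := G.degree_lt_card_verts u
        rwa [Fintype.card_fin] at this
      have hstrict : G.degree a + G.degree u < m + 1 := by omega
      have h2Slt : 2 * S < 2 * m * (m + 1) := by
        have h := sum_sq_lt G ha hu (by rwa [hmdef])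
        rwa [hmdef, hSdef] at h
      have h2Slt' : 2 * S < 2 * (m * (m + 1)) := (mul_assoc 2 m (m + 1)) ▸ h2Slt
      have hSlt : S < m * (m + 1) := by omega
      rw [← hmeq]
      nlinarith [hm1, hSlt]
  -- degree sums for the star
  have hstar0 : (starOn n).degree (0 : Fin n) = n - 1 := by
    rw [← SimpleGraph.card_neighborFinset_eq_degree, starOn_neighborFinset_zero,
      Finset.card_erase_of_mem (Finset.mem_univ 0), Finset.card_univ, Fintype.card_fin]
  have hstarv : ∀ v : Fin n, v ≠ 0 → (starOn n).degree v = 1 := by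
    intro v hv
    rw [← SimpleGraph.card_neighborFinset_eq_degree, starOn_neighborFinset_ne hv,
      Finset.card_singleton]
  have hstarsum : ∑ v, (starOn n).degree v = 2 * (n - 1) := by
    rw [← Finset.add_sum_erase _ _ (Finset.mem_univ (0 : Fin n)), hstar0]
    have : ∑ v ∈ Finset.univ.erase (0 : Fin n), (starOn n).degree v
        = ∑ v ∈ Finset.univ.erase (0 : Fin n), 1 :=
      Finset.sum_congr rfl fun v hv => hstarv v (Finset.mem_erase.1 hv).1
    rw [this, Finset.sum_const, Finset.card_erase_of_mem (Finset.mem_univ 0),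
      Finset.card_univ, Fintype.card_fin, smul_eq_mul, mul_one]
    omega
  have hstarsumsq : ∑ v, (starOn n).degree v ^ 2 = (n - 1) ^ 2 + (n - 1) := by
    rw [← Finset.add_sum_erase _ _ (Finset.mem_univ (0 : Fin n)), hstar0]
    have : ∑ v ∈ Finset.univ.erase (0 : Fin n), (starOn n).degree v ^ 2
        = ∑ v ∈ Finset.univ.erase (0 : Fin n), 1 :=
      Finset.sum_congr rfl fun v hv => by rw [hstarv v (Finset.mem_erase.1 hv).1, one_pow]
    rw [this, Finset.sum_const, Finset.card_erase_of_mem (Finset.mem_univ 0),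
      Finset.card_univ, Fintype.card_fin, smul_eq_mul, mul_one]
  -- real versions
  have hdG : ∑ v, (G.degree v : ℝ) = 2 * (m : ℝ) := by
    have h := G.sum_degrees_eq_twice_card_edges
    rw [hmdef] at h
    exact_mod_cast congrArg (fun t : ℕ => (t : ℝ)) h
  have hsG : ∑ v, (G.degree v : ℝ) ^ 2 = (S : ℝ) := by
    rw [← hSdef]
    push_cast
    ring
  have hdS : ∑ v, ((starOn n).degree v : ℝ) = 2 * ((n - 1 : ℕ) : ℝ) := by
    exact_mod_cast congrArg (fun t : ℕ => (t : ℝ)) hstarsum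
  have hsS : ∑ v, ((starOn n).degree v : ℝ) ^ 2
      = ((n - 1 : ℕ) : ℝ) ^ 2 + ((n - 1 : ℕ) : ℝ) := by
    exact_mod_cast congrArg (fun t : ℕ => (t : ℝ)) hstarsumsq
  have hG2 : tr2 G = ((S : ℝ) + 2 * (m : ℝ)) / (2 * (m : ℝ)) ^ 2 := by
    rw [tr2_eq G, hdG, hsG]
  have hS2 : tr2 (starOn n) = (((n - 1 : ℕ) : ℝ) ^ 2 + ((n - 1 : ℕ) : ℝ)
      + 2 * ((n - 1 : ℕ) : ℝ)) / (2 * ((n - 1 : ℕ) : ℝ)) ^ 2 := by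
    rw [tr2_eq (starOn n), hdS, hsS]
  have hmpos : (0 : ℝ) < (m : ℝ) := by exact_mod_cast hm1
  have hkpos : (0 : ℝ) < ((n - 1 : ℕ) : ℝ) := by exact_mod_cast hk1
  have hSnn : (0 : ℝ) ≤ (S : ℝ) := Nat.cast_nonneg S
  have hG2pos : 0 < tr2 G := by
    rw [hG2]
    exact div_pos (by linarith) (pow_pos (by linarith) 2)
  have hcmp : tr2 G < tr2 (starOn n) := by
    rw [hG2, hS2, div_lt_div_iff₀ (pow_pos (by linarith) 2) (pow_pos (by linarith) 2)]
    have key2 := mul_lt_mul_of_pos_left key (show 0 < 4 * (n - 1) by omega)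
    have key2' : (4 * ((n - 1 : ℕ) : ℝ)) * (((n - 1 : ℕ) : ℝ) * (2 * m + S))
        < (4 * ((n - 1 : ℕ) : ℝ)) * ((m : ℝ) ^ 2 * (((n - 1 : ℕ) : ℝ) + 3)) := by
      exact_mod_cast key2
    nlinarith [key2']
  have hlog : Real.logb 2 (tr2 G) < Real.logb 2 (tr2 (starOn n)) :=
    Real.logb_lt_logb one_lt_two hG2pos hcmp
  exact neg_lt_neg hlog

end VNE
end

section
/- Let n ≥ 4, let K_{2,n−2} be the complete bipartite graph with parts {u, v} of size 2 and a part of size n−2, and let e = uv. Then S(K_{2,n−2}) = 1/2 + (n/(4n−8))·log₂((4n−8)/n) + ((n−3)/(2n−4))·log₂(2n−4) and S(K_{2,n−2}+e) = (n/(2n−3))·log₂((4n−6)/n) + ((n−3)/(2n−3))·log₂(2n−3). -/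
open Matrix Real Finset

namespace VNE

variable {V : Type*} [Fintype V] [DecidableEq V]

variable {V : Type*} [Fintype V] [DecidableEq V]

lemma conj_mul_conj (U P Q : Matrix V V ℝ) (hU2 : star U * U = 1) :
    (U * P * star U) * (U * Q * star U) = U * (P * Q) * star U := by
  simp only [← mul_assoc]
  rw [mul_assoc (U * P) (star U) U, hU2, mul_one]

lemma conj_mul_conj' (U P Q : Matrix V V ℝ) (hU1 : U * star U = 1) :
    (star U * P * U) * (star U * Q * U) = star U * (P * Q) * U := by
  simp only [← mul_assoc]
  rw [mul_assoc (star U * P) U (star U), hU1, mul_one]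

lemma spec_real {A : Matrix V V ℝ} (hA : A.IsHermitian) :
    A = (hA.eigenvectorUnitary : Matrix V V ℝ) * diagonal hA.eigenvalues
      * star (hA.eigenvectorUnitary : Matrix V V ℝ) := by
  have := hA.spectral_theorem
  simpa using this

lemma sub_smul_conj {A : Matrix V V ℝ} (hA : A.IsHermitian) (x : ℝ) :
    A - x • 1 = (hA.eigenvectorUnitary : Matrix V V ℝ)
      * diagonal (fun j => hA.eigenvalues j - x)
      * star (hA.eigenvectorUnitary : Matrix V V ℝ) := by
  have hU1 : (hA.eigenvectorUnitary : Matrix V V ℝ) * star (hA.eigenvectorUnitary : Matrix V V ℝ) = 1 :=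
    Matrix.mem_unitaryGroup_iff.mp hA.eigenvectorUnitary.2
  have hd : diagonal (fun j => hA.eigenvalues j - x)
      = diagonal hA.eigenvalues - x • (1 : Matrix V V ℝ) := by
    ext i j
    rcases eq_or_ne i j with h | h <;>
      simp [Matrix.diagonal_apply, Matrix.one_apply, h, Matrix.sub_apply]
  rw [hd, Matrix.mul_sub, Matrix.sub_mul, ← spec_real hA]
  congr 1
  rw [Matrix.mul_smul, Matrix.smul_mul, mul_one, hU1]

lemma diag_conj {A : Matrix V V ℝ} (hA : A.IsHermitian) :
    diagonal hA.eigenvalues = star (hA.eigenvectorUnitary : Matrix V V ℝ) * A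
      * (hA.eigenvectorUnitary : Matrix V V ℝ) := by
  have hU1 : (hA.eigenvectorUnitary : Matrix V V ℝ) * star (hA.eigenvectorUnitary : Matrix V V ℝ) = 1 :=
    Matrix.mem_unitaryGroup_iff.mp hA.eigenvectorUnitary.2
  have hU2 : star (hA.eigenvectorUnitary : Matrix V V ℝ) * (hA.eigenvectorUnitary : Matrix V V ℝ) = 1 :=
    Matrix.mem_unitaryGroup_iff'.mp hA.eigenvectorUnitary.2
  have h := spec_real hA
  calc diagonal hA.eigenvalues
      = (star (hA.eigenvectorUnitary : Matrix V V ℝ) * (hA.eigenvectorUnitary : Matrix V V ℝ))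
        * diagonal hA.eigenvalues
        * (star (hA.eigenvectorUnitary : Matrix V V ℝ) * (hA.eigenvectorUnitary : Matrix V V ℝ)) := by
          rw [hU2, one_mul, mul_one]
    _ = star (hA.eigenvectorUnitary : Matrix V V ℝ)
        * ((hA.eigenvectorUnitary : Matrix V V ℝ) * diagonal hA.eigenvalues
          * star (hA.eigenvectorUnitary : Matrix V V ℝ))
        * (hA.eigenvectorUnitary : Matrix V V ℝ) := by simp only [← mul_assoc]
    _ = _ := by rw [← h]

lemma diag_sub_conj {A : Matrix V V ℝ} (hA : A.IsHermitian) (x : ℝ) :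
    diagonal (fun j => hA.eigenvalues j - x)
      = star (hA.eigenvectorUnitary : Matrix V V ℝ) * (A - x • 1)
      * (hA.eigenvectorUnitary : Matrix V V ℝ) := by
  have hU2 : star (hA.eigenvectorUnitary : Matrix V V ℝ) * (hA.eigenvectorUnitary : Matrix V V ℝ) = 1 :=
    Matrix.mem_unitaryGroup_iff'.mp hA.eigenvectorUnitary.2
  rw [sub_smul_conj hA x]
  simp only [← mul_assoc]
  rw [hU2, one_mul, mul_assoc, hU2, mul_one]

lemma trace_pow_eq {A : Matrix V V ℝ} (hA : A.IsHermitian) (k : ℕ) :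
    (A ^ k).trace = ∑ i, hA.eigenvalues i ^ k := by
  have hU1 : (hA.eigenvectorUnitary : Matrix V V ℝ) * star (hA.eigenvectorUnitary : Matrix V V ℝ) = 1 :=
    Matrix.mem_unitaryGroup_iff.mp hA.eigenvectorUnitary.2
  have hU2 : star (hA.eigenvectorUnitary : Matrix V V ℝ) * (hA.eigenvectorUnitary : Matrix V V ℝ) = 1 :=
    Matrix.mem_unitaryGroup_iff'.mp hA.eigenvectorUnitary.2
  set U : Matrix V V ℝ := (hA.eigenvectorUnitary : Matrix V V ℝ)
  have hpow : A ^ k = U * (diagonal hA.eigenvalues) ^ k * star U := by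
    induction k with
    | zero => simp [pow_zero, hU1]
    | succ m ih =>
      calc A ^ (m + 1) = A ^ m * A := pow_succ A m
        _ = (U * diagonal hA.eigenvalues ^ m * star U)
            * (U * diagonal hA.eigenvalues * star U) := by rw [ih, ← spec_real hA]
        _ = U * (diagonal hA.eigenvalues ^ m * diagonal hA.eigenvalues) * star U :=
            conj_mul_conj _ _ _ hU2
        _ = U * diagonal hA.eigenvalues ^ (m + 1) * star U := by rw [← pow_succ]
  rw [hpow, Matrix.trace_mul_cycle, hU2, one_mul, Matrix.diagonal_pow, Matrix.trace_diagonal]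
  simp [Pi.pow_apply]

lemma eig_quartic {A : Matrix V V ℝ} (hA : A.IsHermitian) (a b c : ℝ)
    (h : A * (A - a • 1) * (A - b • 1) * (A - c • 1) = 0) (i : V) :
    hA.eigenvalues i * (hA.eigenvalues i - a) * (hA.eigenvalues i - b)
      * (hA.eigenvalues i - c) = 0 := by
  have hU1 : (hA.eigenvectorUnitary : Matrix V V ℝ) * star (hA.eigenvectorUnitary : Matrix V V ℝ) = 1 :=
    Matrix.mem_unitaryGroup_iff.mp hA.eigenvectorUnitary.2
  set U : Matrix V V ℝ := (hA.eigenvectorUnitary : Matrix V V ℝ)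
  have h2 : diagonal hA.eigenvalues * diagonal (fun j => hA.eigenvalues j - a)
      * diagonal (fun j => hA.eigenvalues j - b) * diagonal (fun j => hA.eigenvalues j - c)
      = 0 := by
    rw [diag_conj hA, diag_sub_conj hA a, diag_sub_conj hA b, diag_sub_conj hA c,
      conj_mul_conj' U _ _ hU1, conj_mul_conj' U _ _ hU1, conj_mul_conj' U _ _ hU1, h]
    simp
  simp only [Matrix.diagonal_mul_diagonal] at h2
  have := congrFun (congrFun h2 i) i
  simpa using this

lemma eig_cubic {A : Matrix V V ℝ} (hA : A.IsHermitian) (a b : ℝ)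
    (h : A * (A - a • 1) * (A - b • 1) = 0) (i : V) :
    hA.eigenvalues i * (hA.eigenvalues i - a) * (hA.eigenvalues i - b) = 0 := by
  have hU1 : (hA.eigenvectorUnitary : Matrix V V ℝ) * star (hA.eigenvectorUnitary : Matrix V V ℝ) = 1 :=
    Matrix.mem_unitaryGroup_iff.mp hA.eigenvectorUnitary.2
  set U : Matrix V V ℝ := (hA.eigenvectorUnitary : Matrix V V ℝ)
  have h2 : diagonal hA.eigenvalues * diagonal (fun j => hA.eigenvalues j - a)
      * diagonal (fun j => hA.eigenvalues j - b) = 0 := by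
    rw [diag_conj hA, diag_sub_conj hA a, diag_sub_conj hA b,
      conj_mul_conj' U _ _ hU1, conj_mul_conj' U _ _ hU1, h]
    simp
  simp only [Matrix.diagonal_mul_diagonal] at h2
  have := congrFun (congrFun h2 i) i
  simpa using this

lemma sum_three_vals (lam : V → ℝ) (a b c : ℝ)
    (ha : a ≠ 0) (hb : b ≠ 0) (hc : c ≠ 0) (hab : a ≠ b) (hac : a ≠ c) (hbc : b ≠ c)
    (hmem : ∀ i, lam i = 0 ∨ lam i = a ∨ lam i = b ∨ lam i = c)
    (g : ℝ → ℝ) (hg : g 0 = 0) :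
    ∑ i, g (lam i) =
      (univ.filter (fun i => lam i = a)).card * g a
      + (univ.filter (fun i => lam i = b)).card * g b
      + (univ.filter (fun i => lam i = c)).card * g c := by
  have key : ∀ i, g (lam i) =
      (if lam i = a then (1:ℝ) else 0) * g a + (if lam i = b then (1:ℝ) else 0) * g b
      + (if lam i = c then (1:ℝ) else 0) * g c := by
    intro i
    rcases hmem i with h | h | h | h <;> rw [h]
    · rw [if_neg (Ne.symm ha), if_neg (Ne.symm hb), if_neg (Ne.symm hc), hg]; ring
    · rw [if_pos rfl, if_neg hab, if_neg hac]; ring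
    · rw [if_neg (Ne.symm hab), if_pos rfl, if_neg hbc]; ring
    · rw [if_neg (Ne.symm hac), if_neg (Ne.symm hbc), if_pos rfl]; ring
  calc ∑ i, g (lam i)
      = ∑ i, ((if lam i = a then (1:ℝ) else 0) * g a + (if lam i = b then (1:ℝ) else 0) * g b
        + (if lam i = c then (1:ℝ) else 0) * g c) := Finset.sum_congr rfl (fun i _ => key i)
    _ = _ := by
        rw [Finset.sum_add_distrib, Finset.sum_add_distrib, ← Finset.sum_mul, ← Finset.sum_mul,
          ← Finset.sum_mul, Finset.sum_boole, Finset.sum_boole, Finset.sum_boole]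

lemma count_three (lam : V → ℝ) (a b c p q r : ℝ)
    (ha : a ≠ 0) (hb : b ≠ 0) (hc : c ≠ 0) (hab : a ≠ b) (hac : a ≠ c) (hbc : b ≠ c)
    (hmem : ∀ i, lam i = 0 ∨ lam i = a ∨ lam i = b ∨ lam i = c)
    (h1 : ∑ i, lam i = p * a + q * b + r * c)
    (h2 : ∑ i, (lam i) ^ 2 = p * a ^ 2 + q * b ^ 2 + r * c ^ 2)
    (h3 : ∑ i, (lam i) ^ 3 = p * a ^ 3 + q * b ^ 3 + r * c ^ 3)
    (f : ℝ → ℝ) (hf : f 0 = 0) :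
    ∑ i, f (lam i) = p * f a + q * f b + r * f c := by
  set P : ℝ := ((univ.filter (fun i => lam i = a)).card : ℝ) with hPdef
  set Q : ℝ := ((univ.filter (fun i => lam i = b)).card : ℝ) with hQdef
  set R : ℝ := ((univ.filter (fun i => lam i = c)).card : ℝ) with hRdef
  have e1 : ∑ i, lam i = P * a + Q * b + R * c := by
    simpa using sum_three_vals lam a b c ha hb hc hab hac hbc hmem (fun x => x) rfl
  have e2 : ∑ i, (lam i) ^ 2 = P * a ^ 2 + Q * b ^ 2 + R * c ^ 2 := by
    simpa using sum_three_vals lam a b c ha hb hc hab hac hbc hmem (fun x => x ^ 2) (by norm_num)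
  have e3 : ∑ i, (lam i) ^ 3 = P * a ^ 3 + Q * b ^ 3 + R * c ^ 3 := by
    simpa using sum_three_vals lam a b c ha hb hc hab hac hbc hmem (fun x => x ^ 3) (by norm_num)
  have E1 : (P - p) * a + (Q - q) * b + (R - r) * c = 0 := by linear_combination h1 - e1
  have E2 : (P - p) * a ^ 2 + (Q - q) * b ^ 2 + (R - r) * c ^ 2 = 0 := by
    linear_combination h2 - e2
  have E3 : (P - p) * a ^ 3 + (Q - q) * b ^ 3 + (R - r) * c ^ 3 = 0 := by
    linear_combination h3 - e3
  have hP : P = p := by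
    have h : (P - p) * (a * (a - b) * (a - c)) = 0 := by
      linear_combination b * c * E1 - (b + c) * E2 + E3
    have hne : a * (a - b) * (a - c) ≠ 0 :=
      mul_ne_zero (mul_ne_zero ha (sub_ne_zero.mpr hab)) (sub_ne_zero.mpr hac)
    rcases mul_eq_zero.mp h with h' | h'
    · linarith
    · exact absurd h' hne
  have hQ : Q = q := by
    have h : (Q - q) * (b * (b - a) * (b - c)) = 0 := by
      linear_combination a * c * E1 - (a + c) * E2 + E3
    have hne : b * (b - a) * (b - c) ≠ 0 :=
      mul_ne_zero (mul_ne_zero hb (sub_ne_zero.mpr hab.symm)) (sub_ne_zero.mpr hbc)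
    rcases mul_eq_zero.mp h with h' | h'
    · linarith
    · exact absurd h' hne
  have hR : R = r := by
    have h : (R - r) * (c * (c - a) * (c - b)) = 0 := by
      linear_combination a * b * E1 - (a + b) * E2 + E3
    have hne : c * (c - a) * (c - b) ≠ 0 :=
      mul_ne_zero (mul_ne_zero hc (sub_ne_zero.mpr hac.symm)) (sub_ne_zero.mpr hbc.symm)
    rcases mul_eq_zero.mp h with h' | h'
    · linarith
    · exact absurd h' hne
  have := sum_three_vals lam a b c ha hb hc hab hac hbc hmem f hf
  rw [this, ← hPdef, ← hQdef, ← hRdef, hP, hQ, hR]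

lemma sum_two_vals (lam : V → ℝ) (a b : ℝ)
    (ha : a ≠ 0) (hb : b ≠ 0) (hab : a ≠ b)
    (hmem : ∀ i, lam i = 0 ∨ lam i = a ∨ lam i = b)
    (g : ℝ → ℝ) (hg : g 0 = 0) :
    ∑ i, g (lam i) =
      (univ.filter (fun i => lam i = a)).card * g a
      + (univ.filter (fun i => lam i = b)).card * g b := by
  have key : ∀ i, g (lam i) =
      (if lam i = a then (1:ℝ) else 0) * g a + (if lam i = b then (1:ℝ) else 0) * g b := by
    intro i
    rcases hmem i with h | h | h <;> rw [h]
    · rw [if_neg (Ne.symm ha), if_neg (Ne.symm hb), hg]; ring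
    · rw [if_pos rfl, if_neg hab]; ring
    · rw [if_neg (Ne.symm hab), if_pos rfl]; ring
  calc ∑ i, g (lam i)
      = ∑ i, ((if lam i = a then (1:ℝ) else 0) * g a
        + (if lam i = b then (1:ℝ) else 0) * g b) := Finset.sum_congr rfl (fun i _ => key i)
    _ = _ := by
        rw [Finset.sum_add_distrib, ← Finset.sum_mul, ← Finset.sum_mul,
          Finset.sum_boole, Finset.sum_boole]

lemma count_two (lam : V → ℝ) (a b p q : ℝ)
    (ha : a ≠ 0) (hb : b ≠ 0) (hab : a ≠ b)
    (hmem : ∀ i, lam i = 0 ∨ lam i = a ∨ lam i = b)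
    (h1 : ∑ i, lam i = p * a + q * b)
    (h2 : ∑ i, (lam i) ^ 2 = p * a ^ 2 + q * b ^ 2)
    (f : ℝ → ℝ) (hf : f 0 = 0) :
    ∑ i, f (lam i) = p * f a + q * f b := by
  set P : ℝ := ((univ.filter (fun i => lam i = a)).card : ℝ) with hPdef
  set Q : ℝ := ((univ.filter (fun i => lam i = b)).card : ℝ) with hQdef
  have e1 : ∑ i, lam i = P * a + Q * b := by
    simpa using sum_two_vals lam a b ha hb hab hmem (fun x => x) rfl
  have e2 : ∑ i, (lam i) ^ 2 = P * a ^ 2 + Q * b ^ 2 := by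
    simpa using sum_two_vals lam a b ha hb hab hmem (fun x => x ^ 2) (by norm_num)
  have E1 : (P - p) * a + (Q - q) * b = 0 := by linear_combination h1 - e1
  have E2 : (P - p) * a ^ 2 + (Q - q) * b ^ 2 = 0 := by linear_combination h2 - e2
  have hP : P = p := by
    have h : (P - p) * (a * (a - b)) = 0 := by linear_combination E2 - b * E1
    have hne : a * (a - b) ≠ 0 := mul_ne_zero ha (sub_ne_zero.mpr hab)
    rcases mul_eq_zero.mp h with h' | h'
    · linarith
    · exact absurd h' hne
  have hQ : Q = q := by
    have h : (Q - q) * (b * (b - a)) = 0 := by linear_combination E2 - a * E1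
    have hne : b * (b - a) ≠ 0 := mul_ne_zero hb (sub_ne_zero.mpr hab.symm)
    rcases mul_eq_zero.mp h with h' | h'
    · linarith
    · exact absurd h' hne
  have := sum_two_vals lam a b ha hb hab hmem f hf
  rw [this, ← hPdef, ← hQdef, hP, hQ]

/-- block matrices over `Fin 2 ⊕ Fin m` -/
noncomputable def bmat (m : ℕ) (d α β β₂ e γ : ℝ) :
    Matrix (Fin 2 ⊕ Fin m) (Fin 2 ⊕ Fin m) ℝ :=
  Matrix.of fun x y =>
    match x, y with
    | .inl i, .inl j => (if i = j then d else 0) + α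
    | .inl _, .inr _ => β
    | .inr _, .inl _ => β₂
    | .inr i, .inr j => (if i = j then e else 0) + γ

lemma bmat_inl_inl (m : ℕ) (d α β β₂ e γ : ℝ) (i j : Fin 2) :
    bmat m d α β β₂ e γ (Sum.inl i) (Sum.inl j) = (if i = j then d else 0) + α := rfl
lemma bmat_inl_inr (m : ℕ) (d α β β₂ e γ : ℝ) (i : Fin 2) (j : Fin m) :
    bmat m d α β β₂ e γ (Sum.inl i) (Sum.inr j) = β := rfl
lemma bmat_inr_inl (m : ℕ) (d α β β₂ e γ : ℝ) (i : Fin m) (j : Fin 2) :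
    bmat m d α β β₂ e γ (Sum.inr i) (Sum.inl j) = β₂ := rfl
lemma bmat_inr_inr (m : ℕ) (d α β β₂ e γ : ℝ) (i j : Fin m) :
    bmat m d α β β₂ e γ (Sum.inr i) (Sum.inr j) = (if i = j then e else 0) + γ := rfl

lemma bmat_mul (m : ℕ) (d α β β₂ e γ d' α' β' β₂' e' γ' : ℝ) :
    bmat m d α β β₂ e γ * bmat m d' α' β' β₂' e' γ' =
      bmat m (d * d') (d * α' + α * d' + 2 * α * α' + m * β * β₂')
        (d * β' + 2 * α * β' + β * e' + m * β * γ')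
        (β₂ * d' + 2 * β₂ * α' + e * β₂' + m * γ * β₂')
        (e * e') (2 * β₂ * β' + e * γ' + γ * e' + m * γ * γ') := by
  ext x y
  rcases x with i | i <;> rcases y with j | j
  · simp only [Matrix.mul_apply, Fintype.sum_sum_type, bmat_inl_inl, bmat_inl_inr, bmat_inr_inl,
      Fin.sum_univ_two, Finset.sum_const, Finset.card_univ, Fintype.card_fin, nsmul_eq_mul]
    fin_cases i <;> fin_cases j <;> simp <;> ring
  · simp only [Matrix.mul_apply, Fintype.sum_sum_type, bmat_inl_inl, bmat_inl_inr, bmat_inr_inr,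
      Fin.sum_univ_two, mul_add, add_mul, mul_ite, ite_mul, zero_mul, mul_zero,
      Finset.sum_add_distrib, Finset.sum_ite_eq, Finset.sum_ite_eq', Finset.mem_univ, if_true,
      Finset.sum_const, Finset.card_univ, Fintype.card_fin, nsmul_eq_mul]
    fin_cases i <;> simp <;> ring
  · simp only [Matrix.mul_apply, Fintype.sum_sum_type, bmat_inr_inl, bmat_inl_inl, bmat_inr_inr,
      Fin.sum_univ_two, mul_add, add_mul, mul_ite, ite_mul, zero_mul, mul_zero,
      Finset.sum_add_distrib, Finset.sum_ite_eq, Finset.sum_ite_eq', Finset.mem_univ, if_true,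
      Finset.sum_const, Finset.card_univ, Fintype.card_fin, nsmul_eq_mul]
    fin_cases j <;> simp <;> ring
  · simp only [Matrix.mul_apply, Fintype.sum_sum_type, bmat_inr_inl, bmat_inl_inr, bmat_inr_inr,
      Fin.sum_univ_two, mul_add, add_mul, mul_ite, ite_mul, zero_mul, mul_zero,
      Finset.sum_add_distrib, Finset.sum_ite_eq, Finset.sum_ite_eq', Finset.mem_univ, if_true,
      Finset.sum_const, Finset.card_univ, Fintype.card_fin, nsmul_eq_mul]
    by_cases h : i = j <;> simp [h] <;> ring

lemma bmat_one (m : ℕ) : (1 : Matrix (Fin 2 ⊕ Fin m) (Fin 2 ⊕ Fin m) ℝ) = bmat m 1 0 0 0 1 0 := by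
  ext x y
  rcases x with i | i <;> rcases y with j | j <;>
    simp [Matrix.one_apply, bmat_inl_inl, bmat_inl_inr, bmat_inr_inl, bmat_inr_inr,
      Sum.inl.injEq, Sum.inr.injEq]

lemma bmat_smul (m : ℕ) (c d α β β₂ e γ : ℝ) :
    c • bmat m d α β β₂ e γ = bmat m (c * d) (c * α) (c * β) (c * β₂) (c * e) (c * γ) := by
  ext x y
  rcases x with i | i <;> rcases y with j | j <;>
    simp only [Matrix.smul_apply, bmat_inl_inl, bmat_inl_inr, bmat_inr_inl, bmat_inr_inr,
      smul_eq_mul, mul_add, mul_ite, mul_zero]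

lemma bmat_sub (m : ℕ) (d α β β₂ e γ d' α' β' β₂' e' γ' : ℝ) :
    bmat m d α β β₂ e γ - bmat m d' α' β' β₂' e' γ' =
      bmat m (d - d') (α - α') (β - β') (β₂ - β₂') (e - e') (γ - γ') := by
  ext x y
  rcases x with i | i <;> rcases y with j | j <;>
    simp only [Matrix.sub_apply, bmat_inl_inl, bmat_inl_inr, bmat_inr_inl, bmat_inr_inr] <;>
    split <;> ring

lemma bmat_zero (m : ℕ) : bmat m 0 0 0 0 0 0 = 0 := by
  ext x y
  rcases x with i | i <;> rcases y with j | j <;>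
    simp [bmat_inl_inl, bmat_inl_inr, bmat_inr_inl, bmat_inr_inr]

lemma bmat_trace (m : ℕ) (d α β β₂ e γ : ℝ) :
    (bmat m d α β β₂ e γ).trace = 2 * (d + α) + m * (e + γ) := by
  simp only [Matrix.trace, Matrix.diag, Fintype.sum_sum_type, bmat_inl_inl, bmat_inr_inr,
    if_pos rfl, if_true, eq_self_iff_true, Fin.sum_univ_two, Finset.sum_const, Finset.card_univ, Fintype.card_fin,
    nsmul_eq_mul]
  ring

lemma bmat_congr (m : ℕ) {d α β β₂ e γ d' α' β' β₂' e' γ' : ℝ}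
    (h1 : d = d') (h2 : α = α') (h3 : β = β') (h4 : β₂ = β₂') (h5 : e = e') (h6 : γ = γ') :
    bmat m d α β β₂ e γ = bmat m d' α' β' β₂' e' γ' := by
  rw [h1, h2, h3, h4, h5, h6]

-- degree computations
lemma G1_adj_ll (m : ℕ) (i j : Fin 2) :
    ¬ (completeBipartiteGraph (Fin 2) (Fin m)).Adj (Sum.inl i) (Sum.inl j) := by
  simp [completeBipartiteGraph]

lemma G1_adj_lr (m : ℕ) (i : Fin 2) (j : Fin m) :
    (completeBipartiteGraph (Fin 2) (Fin m)).Adj (Sum.inl i) (Sum.inr j) := by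
  simp [completeBipartiteGraph]

lemma G1_adj_rl (m : ℕ) (i : Fin m) (j : Fin 2) :
    (completeBipartiteGraph (Fin 2) (Fin m)).Adj (Sum.inr i) (Sum.inl j) := by
  simp [completeBipartiteGraph]

lemma G1_adj_rr (m : ℕ) (i j : Fin m) :
    ¬ (completeBipartiteGraph (Fin 2) (Fin m)).Adj (Sum.inr i) (Sum.inr j) := by
  simp [completeBipartiteGraph]

lemma G1_deg_inl (m : ℕ) (inst : DecidableRel (completeBipartiteGraph (Fin 2) (Fin m)).Adj)
    (i : Fin 2) : (completeBipartiteGraph (Fin 2) (Fin m)).degree (Sum.inl i) = m := by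
  rw [← SimpleGraph.card_neighborFinset_eq_degree, SimpleGraph.neighborFinset_eq_filter,
    Finset.card_filter, Fintype.sum_sum_type]
  simp [G1_adj_ll, G1_adj_lr]

lemma G1_deg_inr (m : ℕ) (inst : DecidableRel (completeBipartiteGraph (Fin 2) (Fin m)).Adj)
    (i : Fin m) : (completeBipartiteGraph (Fin 2) (Fin m)).degree (Sum.inr i) = 2 := by
  rw [← SimpleGraph.card_neighborFinset_eq_degree, SimpleGraph.neighborFinset_eq_filter,
    Finset.card_filter, Fintype.sum_sum_type]
  simp [G1_adj_rl, G1_adj_rr]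

lemma lap1 (m : ℕ) (inst : DecidableRel (completeBipartiteGraph (Fin 2) (Fin m)).Adj) :
    (completeBipartiteGraph (Fin 2) (Fin m)).lapMatrix ℝ = bmat m m 0 (-1) (-1) 2 0 := by
  ext x y
  rcases x with i | i <;> rcases y with j | j
  · rw [bmat_inl_inl]
    simp only [SimpleGraph.lapMatrix, SimpleGraph.degMatrix, Matrix.sub_apply,
      Matrix.diagonal_apply, SimpleGraph.adjMatrix_apply]
    rw [if_neg (G1_adj_ll m i j)]
    by_cases h : i = j
    · subst h
      simp [G1_deg_inl m inst i]
    · rw [if_neg (by simpa using h), if_neg h]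
      ring
  · rw [bmat_inl_inr]
    simp only [SimpleGraph.lapMatrix, SimpleGraph.degMatrix, Matrix.sub_apply,
      Matrix.diagonal_apply, SimpleGraph.adjMatrix_apply]
    rw [if_pos (G1_adj_lr m i j), if_neg (by simp)]
    ring
  · rw [bmat_inr_inl]
    simp only [SimpleGraph.lapMatrix, SimpleGraph.degMatrix, Matrix.sub_apply,
      Matrix.diagonal_apply, SimpleGraph.adjMatrix_apply]
    rw [if_pos (G1_adj_rl m i j), if_neg (by simp)]
    ring
  · rw [bmat_inr_inr]
    simp only [SimpleGraph.lapMatrix, SimpleGraph.degMatrix, Matrix.sub_apply,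
      Matrix.diagonal_apply, SimpleGraph.adjMatrix_apply]
    rw [if_neg (G1_adj_rr m i j)]
    by_cases h : i = j
    · subst h
      simp [G1_deg_inr m inst i]
    · rw [if_neg (by simpa using h), if_neg h]
      ring

-- second graph
lemma G2_adj_ll (m : ℕ) (i j : Fin 2) :
    (completeBipartiteGraph (Fin 2) (Fin m) ⊔
      SimpleGraph.fromEdgeSet {s((Sum.inl 0 : Fin 2 ⊕ Fin m), Sum.inl 1)}).Adj
      (Sum.inl i) (Sum.inl j) ↔ i ≠ j := by
  rw [SimpleGraph.sup_adj, SimpleGraph.fromEdgeSet_adj]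
  simp only [G1_adj_ll, false_or, Set.mem_singleton_iff, Sym2.eq_iff]
  constructor
  · rintro ⟨h1 | h1, h2⟩ <;> simp_all
  · intro h
    fin_cases i <;> fin_cases j <;> simp_all
lemma G2_adj_lr (m : ℕ) (i : Fin 2) (j : Fin m) :
    (completeBipartiteGraph (Fin 2) (Fin m) ⊔
      SimpleGraph.fromEdgeSet {s((Sum.inl 0 : Fin 2 ⊕ Fin m), Sum.inl 1)}).Adj
      (Sum.inl i) (Sum.inr j) := Or.inl (G1_adj_lr m i j)
lemma G2_adj_rl (m : ℕ) (i : Fin m) (j : Fin 2) :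
    (completeBipartiteGraph (Fin 2) (Fin m) ⊔
      SimpleGraph.fromEdgeSet {s((Sum.inl 0 : Fin 2 ⊕ Fin m), Sum.inl 1)}).Adj
      (Sum.inr i) (Sum.inl j) := Or.inl (G1_adj_rl m i j)
lemma G2_adj_rr (m : ℕ) (i j : Fin m) :
    ¬ (completeBipartiteGraph (Fin 2) (Fin m) ⊔
      SimpleGraph.fromEdgeSet {s((Sum.inl 0 : Fin 2 ⊕ Fin m), Sum.inl 1)}).Adj
      (Sum.inr i) (Sum.inr j) := by
  rw [SimpleGraph.sup_adj, SimpleGraph.fromEdgeSet_adj]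
  simp [G1_adj_rr, Sym2.eq_iff]

lemma G2_deg_inl (m : ℕ)
    (inst : DecidableRel (completeBipartiteGraph (Fin 2) (Fin m) ⊔
      SimpleGraph.fromEdgeSet {s((Sum.inl 0 : Fin 2 ⊕ Fin m), Sum.inl 1)}).Adj)
    (i : Fin 2) :
    (completeBipartiteGraph (Fin 2) (Fin m) ⊔
      SimpleGraph.fromEdgeSet {s((Sum.inl 0 : Fin 2 ⊕ Fin m), Sum.inl 1)}).degree (Sum.inl i)
      = m + 1 := by
  rw [← SimpleGraph.card_neighborFinset_eq_degree, SimpleGraph.neighborFinset_eq_filter,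
    Finset.card_filter, Fintype.sum_sum_type]
  simp only [G2_adj_ll, G2_adj_lr, if_true, Finset.sum_const, Finset.card_univ,
    Fintype.card_fin, smul_eq_mul, mul_one, Fin.sum_univ_two]
  fin_cases i <;> simp [Fin.ext_iff] <;> omega

lemma G2_deg_inr (m : ℕ)
    (inst : DecidableRel (completeBipartiteGraph (Fin 2) (Fin m) ⊔
      SimpleGraph.fromEdgeSet {s((Sum.inl 0 : Fin 2 ⊕ Fin m), Sum.inl 1)}).Adj)
    (i : Fin m) :
    (completeBipartiteGraph (Fin 2) (Fin m) ⊔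
      SimpleGraph.fromEdgeSet {s((Sum.inl 0 : Fin 2 ⊕ Fin m), Sum.inl 1)}).degree (Sum.inr i)
      = 2 := by
  rw [← SimpleGraph.card_neighborFinset_eq_degree, SimpleGraph.neighborFinset_eq_filter,
    Finset.card_filter, Fintype.sum_sum_type]
  simp [G2_adj_rl, G2_adj_rr]

lemma lap2 (m : ℕ)
    (inst : DecidableRel (completeBipartiteGraph (Fin 2) (Fin m) ⊔
      SimpleGraph.fromEdgeSet {s((Sum.inl 0 : Fin 2 ⊕ Fin m), Sum.inl 1)}).Adj) :
    (completeBipartiteGraph (Fin 2) (Fin m) ⊔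
      SimpleGraph.fromEdgeSet {s((Sum.inl 0 : Fin 2 ⊕ Fin m), Sum.inl 1)}).lapMatrix ℝ
      = bmat m (m + 2) (-1) (-1) (-1) 2 0 := by
  ext x y
  rcases x with i | i <;> rcases y with j | j
  · rw [bmat_inl_inl]
    simp only [SimpleGraph.lapMatrix, SimpleGraph.degMatrix, Matrix.sub_apply,
      Matrix.diagonal_apply, SimpleGraph.adjMatrix_apply]
    by_cases h : i = j
    · subst h
      rw [if_pos rfl, if_pos rfl, if_neg (by simp [G2_adj_ll]), G2_deg_inl m inst i]
      push_cast; ring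
    · rw [if_neg (by simpa using h), if_neg h, if_pos ((G2_adj_ll m i j).mpr h)]
      ring
  · rw [bmat_inl_inr]
    simp only [SimpleGraph.lapMatrix, SimpleGraph.degMatrix, Matrix.sub_apply,
      Matrix.diagonal_apply, SimpleGraph.adjMatrix_apply]
    rw [if_pos (G2_adj_lr m i j), if_neg (by simp)]
    ring
  · rw [bmat_inr_inl]
    simp only [SimpleGraph.lapMatrix, SimpleGraph.degMatrix, Matrix.sub_apply,
      Matrix.diagonal_apply, SimpleGraph.adjMatrix_apply]
    rw [if_pos (G2_adj_rl m i j), if_neg (by simp)]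
    ring
  · rw [bmat_inr_inr]
    simp only [SimpleGraph.lapMatrix, SimpleGraph.degMatrix, Matrix.sub_apply,
      Matrix.diagonal_apply, SimpleGraph.adjMatrix_apply]
    rw [if_neg (G2_adj_rr m i j)]
    by_cases h : i = j
    · subst h
      simp [G2_deg_inr m inst i]
    · rw [if_neg (by simpa using h), if_neg h]
      ring


lemma root4 {x a b c : ℝ} (h : x * (x - a) * (x - b) * (x - c) = 0) :
    x = 0 ∨ x = a ∨ x = b ∨ x = c := by
  rcases mul_eq_zero.mp h with h1 | h1
  · rcases mul_eq_zero.mp h1 with h2 | h2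
    · rcases mul_eq_zero.mp h2 with h3 | h3
      · exact Or.inl h3
      · exact Or.inr (Or.inl (by linarith))
    · exact Or.inr (Or.inr (Or.inl (by linarith)))
  · exact Or.inr (Or.inr (Or.inr (by linarith)))

lemma root3 {x a b : ℝ} (h : x * (x - a) * (x - b) = 0) :
    x = 0 ∨ x = a ∨ x = b := by
  rcases mul_eq_zero.mp h with h1 | h1
  · rcases mul_eq_zero.mp h1 with h2 | h2
    · exact Or.inl h2
    · exact Or.inr (Or.inl (by linarith))
  · exact Or.inr (Or.inr (by linarith))

lemma rho1_eq (m : ℕ) (hm : ((m : ℕ) : ℝ) ≠ 0) :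
    rho (completeBipartiteGraph (Fin 2) (Fin m))
      = bmat m ((m : ℝ)/(4*m)) 0 (-(1/(4*(m:ℝ)))) (-(1/(4*(m:ℝ)))) (2/(4*(m:ℝ))) 0 := by
  unfold rho
  rw [lap1 m _, bmat_trace]
  rw [show (2*(((m:ℕ):ℝ)+0) + ((m:ℕ):ℝ)*(2+0)) = 4*(m:ℝ) from by ring]
  rw [bmat_smul]
  exact bmat_congr m (by field_simp) (by simp) (by field_simp) (by field_simp)
    (by field_simp) (by simp)

lemma rho2_eq (m : ℕ) (hm : ((m : ℕ) : ℝ) ≠ 0) :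
    rho (completeBipartiteGraph (Fin 2) (Fin m) ⊔
        SimpleGraph.fromEdgeSet {s((Sum.inl 0 : Fin 2 ⊕ Fin m), Sum.inl 1)})
      = bmat m (((m:ℝ)+2)/(4*(m:ℝ)+2)) (-(1/(4*(m:ℝ)+2))) (-(1/(4*(m:ℝ)+2)))
          (-(1/(4*(m:ℝ)+2))) (2/(4*(m:ℝ)+2)) 0 := by
  have hq : (0:ℝ) < 4*(m:ℝ)+2 := by positivity
  have hqne : (4*(m:ℝ)+2) ≠ 0 := hq.ne'
  unfold rho
  rw [lap2 m _, bmat_trace]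
  rw [show (2*(((m:ℕ):ℝ)+2+(-1)) + ((m:ℕ):ℝ)*(2+0)) = 4*(m:ℝ)+2 from by push_cast; ring]
  rw [bmat_smul]
  exact bmat_congr m (by field_simp) (by field_simp) (by field_simp)
    (by field_simp) (by field_simp) (by simp)

lemma ann1 (m : ℕ) (hm : ((m : ℕ) : ℝ) ≠ 0) :
    rho (completeBipartiteGraph (Fin 2) (Fin m)) *
      (rho (completeBipartiteGraph (Fin 2) (Fin m)) - (2/(4*(m:ℝ))) • 1) *
      (rho (completeBipartiteGraph (Fin 2) (Fin m)) - ((m:ℝ)/(4*(m:ℝ))) • 1) *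
      (rho (completeBipartiteGraph (Fin 2) (Fin m)) - (((m:ℝ)+2)/(4*(m:ℝ))) • 1) = 0 := by
  rw [rho1_eq m hm]
  simp only [bmat_one, bmat_smul, bmat_sub, bmat_mul]
  rw [← bmat_zero m]
  refine bmat_congr m ?_ ?_ ?_ ?_ ?_ ?_ <;> field_simp <;> ring

lemma ann2 (m : ℕ) (hm : ((m : ℕ) : ℝ) ≠ 0) :
    rho (completeBipartiteGraph (Fin 2) (Fin m) ⊔
        SimpleGraph.fromEdgeSet {s((Sum.inl 0 : Fin 2 ⊕ Fin m), Sum.inl 1)}) *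
      (rho (completeBipartiteGraph (Fin 2) (Fin m) ⊔
        SimpleGraph.fromEdgeSet {s((Sum.inl 0 : Fin 2 ⊕ Fin m), Sum.inl 1)})
          - (2/(4*(m:ℝ)+2)) • 1) *
      (rho (completeBipartiteGraph (Fin 2) (Fin m) ⊔
        SimpleGraph.fromEdgeSet {s((Sum.inl 0 : Fin 2 ⊕ Fin m), Sum.inl 1)})
          - (((m:ℝ)+2)/(4*(m:ℝ)+2)) • 1) = 0 := by
  have hq : (0:ℝ) < 4*(m:ℝ)+2 := by positivity
  have hqne : (4*(m:ℝ)+2) ≠ 0 := hq.ne'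
  rw [rho2_eq m hm]
  simp only [bmat_one, bmat_smul, bmat_sub, bmat_mul]
  rw [← bmat_zero m]
  refine bmat_congr m ?_ ?_ ?_ ?_ ?_ ?_ <;> field_simp <;> ring


set_option maxHeartbeats 1000000 in
theorem vnEntropy_completeBipartite_and_plus_e {n : ℕ} (hn : 4 ≤ n) :
    vnEntropy (completeBipartiteGraph (Fin 2) (Fin (n - 2))) =
      1 / 2 + ((n : ℝ) / (4 * n - 8)) * Real.logb 2 ((4 * (n : ℝ) - 8) / n)
        + (((n : ℝ) - 3) / (2 * n - 4)) * Real.logb 2 (2 * (n : ℝ) - 4) ∧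
    vnEntropy (completeBipartiteGraph (Fin 2) (Fin (n - 2)) ⊔
        SimpleGraph.fromEdgeSet {s((Sum.inl 0 : Fin 2 ⊕ Fin (n - 2)), Sum.inl 1)}) =
      ((n : ℝ) / (2 * n - 3)) * Real.logb 2 ((4 * (n : ℝ) - 6) / n)
        + (((n : ℝ) - 3) / (2 * n - 3)) * Real.logb 2 (2 * (n : ℝ) - 3) := by
  have h2n : 2 ≤ n := by omega
  have hmcast : ((n - 2 : ℕ) : ℝ) = (n : ℝ) - 2 := by
    rw [Nat.cast_sub h2n]; norm_num
  have hN4 : (4:ℝ) ≤ (n:ℝ) := by exact_mod_cast hn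
  have hpos1 : (0:ℝ) < (n:ℝ) - 2 := by linarith
  have hmne : ((n - 2 : ℕ) : ℝ) ≠ 0 := by rw [hmcast]; exact hpos1.ne'
  have hposn : (0:ℝ) < (n:ℝ) := by linarith
  have hpos2 : (0:ℝ) < 4*((n:ℝ)-2) := by linarith
  have hpos2b : (0:ℝ) < 4*(n:ℝ)-8 := by linarith
  have hpos3 : (0:ℝ) < 2*(n:ℝ)-4 := by linarith
  have hpos4 : (0:ℝ) < 4*(n:ℝ)-6 := by linarith
  have hpos5 : (0:ℝ) < 2*(n:ℝ)-3 := by linarith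
  have hq1 : (n:ℝ)*4-8 ≠ 0 := by linarith
  have hq2 : (n:ℝ)*4-6 ≠ 0 := by linarith
  have hq3 : (n:ℝ)*2-4 ≠ 0 := by linarith
  have hq4 : (n:ℝ)*2-3 ≠ 0 := by linarith
  have hq5 : (n:ℝ)-2 ≠ 0 := by linarith
  have hq6 : (n:ℝ) ≠ 0 := by linarith
  have l2 : Real.logb 2 2 = 1 := Real.logb_self_eq_one (by norm_num)
  have l4 : Real.logb 2 4 = 2 := by
    rw [show (4:ℝ) = 2^(2:ℕ) from by norm_num, Real.logb_pow, l2]; norm_num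
  constructor
  · -- K_{2,n-2}
    unfold vnEntropy
    have heigs : eigs (completeBipartiteGraph (Fin 2) (Fin (n - 2)))
        = (rho_isHermitian (completeBipartiteGraph (Fin 2) (Fin (n - 2)))).eigenvalues := rfl
    rw [heigs]
    set lam := (rho_isHermitian (completeBipartiteGraph (Fin 2) (Fin (n - 2)))).eigenvalues
      with hlam
    clear_value lam
    have hmem : ∀ i, lam i = 0 ∨ lam i = 2/(4*(n:ℝ)-8)
        ∨ lam i = ((n:ℝ)-2)/(4*(n:ℝ)-8) ∨ lam i = (n:ℝ)/(4*(n:ℝ)-8) := by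
      intro i
      have h := root4 (eig_quartic (rho_isHermitian _) _ _ _ (ann1 (n-2) hmne) i)
      rw [hmcast] at h
      rw [show (4:ℝ)*((n:ℝ)-2) = 4*(n:ℝ)-8 from by ring] at h
      rw [show (n:ℝ)-2+2 = (n:ℝ) from by ring] at h
      rw [hlam]
      exact h
    have hs1 : ∑ i, lam i = 1 := by
      have h := trace_pow_eq (rho_isHermitian (completeBipartiteGraph (Fin 2) (Fin (n - 2)))) 1
      simp only [pow_one] at h
      rw [hlam, ← h, rho1_eq (n-2) hmne, bmat_trace, hmcast]
      field_simp
      ring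
    have hs2 : ∑ i, lam i ^ 2 = (2*(n:ℝ)^2-8)/(4*(n:ℝ)-8)^2 := by
      have h := trace_pow_eq (rho_isHermitian (completeBipartiteGraph (Fin 2) (Fin (n - 2)))) 2
      rw [pow_two] at h
      rw [hlam, ← h, rho1_eq (n-2) hmne, bmat_mul, bmat_trace, hmcast]
      field_simp
      ring
    have hs3 : ∑ i, lam i ^ 3
        = (8*((n:ℝ)-3) + ((n:ℝ)-2)^3 + (n:ℝ)^3)/(4*(n:ℝ)-8)^3 := by
      have h := trace_pow_eq (rho_isHermitian (completeBipartiteGraph (Fin 2) (Fin (n - 2)))) 3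
      rw [pow_three'] at h
      rw [hlam, ← h, rho1_eq (n-2) hmne, bmat_mul, bmat_mul, bmat_trace, hmcast]
      field_simp
      ring
    rcases eq_or_lt_of_le hn with h4 | h5
    · -- n = 4
      have hNeq : (n:ℝ) = 4 := by rw [← h4]; norm_num
      rw [hNeq] at hmem hs2
      have hmem' : ∀ i, lam i = 0 ∨ lam i = 2/(4*(4:ℝ)-8) ∨ lam i = (4:ℝ)/(4*(4:ℝ)-8) := by
        intro i
        rcases hmem i with h | h | h | h
        · exact Or.inl h
        · exact Or.inr (Or.inl h)
        · refine Or.inr (Or.inl ?_); rw [h]; norm_num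
        · exact Or.inr (Or.inr h)
      have hv : (∑ i, -(lam i * Real.logb 2 (lam i)))
          = 2 * -((2/(4*(4:ℝ)-8)) * Real.logb 2 (2/(4*(4:ℝ)-8)))
            + 1 * -(((4:ℝ)/(4*(4:ℝ)-8)) * Real.logb 2 ((4:ℝ)/(4*(4:ℝ)-8))) :=
        count_two lam (2/(4*(4:ℝ)-8)) ((4:ℝ)/(4*(4:ℝ)-8)) 2 1
          (by norm_num) (by norm_num) (by norm_num) hmem'
          (by rw [hs1]; norm_num) (by rw [hs2]; norm_num)
          (fun x => -(x * Real.logb 2 x)) (by norm_num)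
      rw [hv, hNeq]
      have hla : Real.logb 2 (2/(4*(4:ℝ)-8)) = -2 := by
        rw [show (2/(4*(4:ℝ)-8)) = 4⁻¹ from by norm_num, Real.logb_inv, l4]
      have hlb : Real.logb 2 ((4:ℝ)/(4*(4:ℝ)-8)) = -1 := by
        rw [show ((4:ℝ)/(4*(4:ℝ)-8)) = 2⁻¹ from by norm_num, Real.logb_inv, l2]
      have hlc : Real.logb 2 ((4*(4:ℝ)-8)/4) = 1 := by
        rw [show ((4*(4:ℝ)-8)/4) = 2 from by norm_num, l2]
      have hld : Real.logb 2 (2*(4:ℝ)-4) = 2 := by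
        rw [show (2*(4:ℝ)-4) = 4 from by norm_num, l4]
      rw [hla, hlb, hlc, hld]
      norm_num
    · -- 4 < n
      have hN5 : (5:ℝ) ≤ (n:ℝ) := by exact_mod_cast h5
      have ha : (2/(4*(n:ℝ)-8)) ≠ 0 := (div_pos (by norm_num) hpos2b).ne'
      have hb : (((n:ℝ)-2)/(4*(n:ℝ)-8)) ≠ 0 := (div_pos hpos1 hpos2b).ne'
      have hc : ((n:ℝ)/(4*(n:ℝ)-8)) ≠ 0 := (div_pos hposn hpos2b).ne'
      have hab : (2/(4*(n:ℝ)-8)) ≠ (((n:ℝ)-2)/(4*(n:ℝ)-8)) := by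
        intro h
        rw [div_eq_div_iff hpos2b.ne' hpos2b.ne'] at h
        nlinarith
      have hac : (2/(4*(n:ℝ)-8)) ≠ ((n:ℝ)/(4*(n:ℝ)-8)) := by
        intro h
        rw [div_eq_div_iff hpos2b.ne' hpos2b.ne'] at h
        nlinarith
      have hbc : (((n:ℝ)-2)/(4*(n:ℝ)-8)) ≠ ((n:ℝ)/(4*(n:ℝ)-8)) := by
        intro h
        rw [div_eq_div_iff hpos2b.ne' hpos2b.ne'] at h
        nlinarith
      have hv : (∑ i, -(lam i * Real.logb 2 (lam i)))
          = ((n:ℝ)-3) * -((2/(4*(n:ℝ)-8)) * Real.logb 2 (2/(4*(n:ℝ)-8)))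
            + 1 * -((((n:ℝ)-2)/(4*(n:ℝ)-8)) * Real.logb 2 (((n:ℝ)-2)/(4*(n:ℝ)-8)))
            + 1 * -(((n:ℝ)/(4*(n:ℝ)-8)) * Real.logb 2 ((n:ℝ)/(4*(n:ℝ)-8))) :=
        count_three lam (2/(4*(n:ℝ)-8)) (((n:ℝ)-2)/(4*(n:ℝ)-8)) ((n:ℝ)/(4*(n:ℝ)-8))
          ((n:ℝ)-3) 1 1 ha hb hc hab hac hbc hmem
          (by rw [hs1]; field_simp; ring)
          (by rw [hs2]; field_simp; ring)
          (by rw [hs3]; field_simp; ring)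
          (fun x => -(x * Real.logb 2 x)) (by norm_num)
      have hLa : Real.logb 2 (2/(4*(n:ℝ)-8)) = -(1 + Real.logb 2 ((n:ℝ)-2)) := by
        rw [show (4*(n:ℝ)-8) = 4*((n:ℝ)-2) from by ring,
          Real.logb_div two_ne_zero hpos2.ne',
          Real.logb_mul (by norm_num : (4:ℝ) ≠ 0) hpos1.ne', l4, l2]
        ring
      have hLb : Real.logb 2 (((n:ℝ)-2)/(4*(n:ℝ)-8)) = -2 := by
        rw [show ((n:ℝ)-2)/(4*(n:ℝ)-8) = 4⁻¹ from by
          rw [div_eq_iff hpos2b.ne']; ring, Real.logb_inv, l4]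
      have hLc : Real.logb 2 ((n:ℝ)/(4*(n:ℝ)-8))
          = Real.logb 2 (n:ℝ) - (2 + Real.logb 2 ((n:ℝ)-2)) := by
        rw [Real.logb_div hposn.ne' hpos2b.ne',
          show (4*(n:ℝ)-8) = 4*((n:ℝ)-2) from by ring,
          Real.logb_mul (by norm_num : (4:ℝ) ≠ 0) hpos1.ne', l4]
      have hR1 : Real.logb 2 ((4*(n:ℝ)-8)/(n:ℝ))
          = 2 + Real.logb 2 ((n:ℝ)-2) - Real.logb 2 (n:ℝ) := by
        rw [Real.logb_div hpos2b.ne' hposn.ne',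
          show (4*(n:ℝ)-8) = 4*((n:ℝ)-2) from by ring,
          Real.logb_mul (by norm_num : (4:ℝ) ≠ 0) hpos1.ne', l4]
      have hR2 : Real.logb 2 (2*(n:ℝ)-4) = 1 + Real.logb 2 ((n:ℝ)-2) := by
        rw [show (2*(n:ℝ)-4) = 2*((n:ℝ)-2) from by ring,
          Real.logb_mul two_ne_zero hpos1.ne', l2]
      rw [hv, hLa, hLb, hLc, hR1, hR2]
      field_simp
      ring
  · -- K_{2,n-2} + e
    unfold vnEntropy
    have heigs : eigs (completeBipartiteGraph (Fin 2) (Fin (n - 2)) ⊔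
          SimpleGraph.fromEdgeSet {s((Sum.inl 0 : Fin 2 ⊕ Fin (n - 2)), Sum.inl 1)})
        = (rho_isHermitian (completeBipartiteGraph (Fin 2) (Fin (n - 2)) ⊔
          SimpleGraph.fromEdgeSet
            {s((Sum.inl 0 : Fin 2 ⊕ Fin (n - 2)), Sum.inl 1)})).eigenvalues := rfl
    rw [heigs]
    set lam := (rho_isHermitian (completeBipartiteGraph (Fin 2) (Fin (n - 2)) ⊔
        SimpleGraph.fromEdgeSet
          {s((Sum.inl 0 : Fin 2 ⊕ Fin (n - 2)), Sum.inl 1)})).eigenvalues with hlam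
    clear_value lam
    have hmem : ∀ i, lam i = 0 ∨ lam i = 2/(4*(n:ℝ)-6) ∨ lam i = (n:ℝ)/(4*(n:ℝ)-6) := by
      intro i
      have h := root3 (eig_cubic (rho_isHermitian _) _ _ (ann2 (n-2) hmne) i)
      rw [hmcast] at h
      rw [show (4:ℝ)*((n:ℝ)-2)+2 = 4*(n:ℝ)-6 from by ring] at h
      rw [show (n:ℝ)-2+2 = (n:ℝ) from by ring] at h
      rw [hlam]
      exact h
    have hs1 : ∑ i, lam i = 1 := by
      have h := trace_pow_eq (rho_isHermitian (completeBipartiteGraph (Fin 2) (Fin (n - 2)) ⊔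
        SimpleGraph.fromEdgeSet {s((Sum.inl 0 : Fin 2 ⊕ Fin (n - 2)), Sum.inl 1)})) 1
      simp only [pow_one] at h
      have hq : (4*((n:ℝ)-2)+2) ≠ 0 := (by linarith : (0:ℝ) < 4*((n:ℝ)-2)+2).ne'
      rw [hlam, ← h, rho2_eq (n-2) hmne, bmat_trace, hmcast]
      field_simp
      ring
    have hs2 : ∑ i, lam i ^ 2 = (2*(n:ℝ)^2+4*(n:ℝ)-12)/(4*(n:ℝ)-6)^2 := by
      have h := trace_pow_eq (rho_isHermitian (completeBipartiteGraph (Fin 2) (Fin (n - 2)) ⊔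
        SimpleGraph.fromEdgeSet {s((Sum.inl 0 : Fin 2 ⊕ Fin (n - 2)), Sum.inl 1)})) 2
      rw [pow_two] at h
      have hq : (4*((n:ℝ)-2)+2) ≠ 0 := (by linarith : (0:ℝ) < 4*((n:ℝ)-2)+2).ne'
      have hq2 : (4*(n:ℝ)-6) ≠ 0 := hpos4.ne'
      rw [hlam, ← h, rho2_eq (n-2) hmne, bmat_mul, bmat_trace, hmcast]
      field_simp
      ring
    have ha : (2/(4*(n:ℝ)-6)) ≠ 0 := (div_pos (by norm_num) hpos4).ne'
    have hb : ((n:ℝ)/(4*(n:ℝ)-6)) ≠ 0 := (div_pos hposn hpos4).ne'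
    have hab : (2/(4*(n:ℝ)-6)) ≠ ((n:ℝ)/(4*(n:ℝ)-6)) := by
      intro h
      rw [div_eq_div_iff hpos4.ne' hpos4.ne'] at h
      nlinarith
    have hv : (∑ i, -(lam i * Real.logb 2 (lam i)))
        = ((n:ℝ)-3) * -((2/(4*(n:ℝ)-6)) * Real.logb 2 (2/(4*(n:ℝ)-6)))
          + 2 * -(((n:ℝ)/(4*(n:ℝ)-6)) * Real.logb 2 ((n:ℝ)/(4*(n:ℝ)-6))) :=
      count_two lam (2/(4*(n:ℝ)-6)) ((n:ℝ)/(4*(n:ℝ)-6)) ((n:ℝ)-3) 2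
        ha hb hab hmem
        (by rw [hs1]; field_simp; ring)
        (by rw [hs2]; field_simp; ring)
        (fun x => -(x * Real.logb 2 x)) (by norm_num)
    have hLa : Real.logb 2 (2/(4*(n:ℝ)-6)) = -Real.logb 2 (2*(n:ℝ)-3) := by
      rw [show (4*(n:ℝ)-6) = 2*(2*(n:ℝ)-3) from by ring,
        Real.logb_div two_ne_zero ((by linarith : (0:ℝ) < 2*(2*(n:ℝ)-3)).ne'),
        Real.logb_mul two_ne_zero hpos5.ne', l2]
      ring
    have hLb : Real.logb 2 ((n:ℝ)/(4*(n:ℝ)-6))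
        = Real.logb 2 (n:ℝ) - (1 + Real.logb 2 (2*(n:ℝ)-3)) := by
      rw [Real.logb_div hposn.ne' hpos4.ne',
        show (4*(n:ℝ)-6) = 2*(2*(n:ℝ)-3) from by ring,
        Real.logb_mul two_ne_zero hpos5.ne', l2]
    have hR1 : Real.logb 2 ((4*(n:ℝ)-6)/(n:ℝ))
        = 1 + Real.logb 2 (2*(n:ℝ)-3) - Real.logb 2 (n:ℝ) := by
      rw [Real.logb_div hpos4.ne' hposn.ne',
        show (4*(n:ℝ)-6) = 2*(2*(n:ℝ)-3) from by ring,
        Real.logb_mul two_ne_zero hpos5.ne', l2]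
    rw [hv, hLa, hLb, hR1]
    field_simp
    ring

end VNE
end
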